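/- Let j : ℝ⁴ → ℝ⁴ be the orthogonal complex structure j(x,y,z,w) = (−z, w, x, −y), and let f : ℝ⁴ → ℝ⁴ be f(x,y,z,w) = j(x,y,z,w) + (x² − y², −2xy, z² − w², −2zw) = (−z + x² − y², w − 2xy, x + z² − w², −y − 2zw). Then p is a J₀-complex point of the graph Γ_f (i.e. Df(p) ∘ Df(p) = −id) if and only if p = 0. Hence Γ_f has exactly one J₀-complex point. -/
import Mathlib


/-!
STATEMENT 12: With `j(x,y,z,w) = (−z, w, x, −y)` and
`f(x,y,z,w) = j(x,y,z,w) + (x² − y², −2xy, z² − w², −2zw)`,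
a point `p` is a `J₀`-complex point of `Γ_f` (i.e. `Df(p) ∘ Df(p) = −id`)
iff `p = 0`; hence `Γ_f` has exactly one `J₀`-complex point.
-/

open scoped RealInnerProductSpace

noncomputable section

abbrev E4 : Type := EuclideanSpace ℝ (Fin 4)

noncomputable def mk4 (a b c d : ℝ) : E4 := (WithLp.equiv 2 (Fin 4 → ℝ)).symm ![a, b, c, d]

/-- `f(x,y,z,w) = (−z + x² − y², w − 2xy, x + z² − w², −y − 2zw)` -/
noncomputable def f12 : E4 → E4 := fun p =>
  mk4 (-(p 2) + (p 0) ^ 2 - (p 1) ^ 2) (p 3 - 2 * p 0 * p 1)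
      (p 0 + (p 2) ^ 2 - (p 3) ^ 2) (-(p 1) - 2 * p 2 * p 3)

noncomputable def pr (i : Fin 4) : E4 →L[ℝ] ℝ := EuclideanSpace.proj i

lemma prh (i : Fin 4) (p : E4) : HasFDerivAt (fun q : E4 => q i) (pr i) p :=
  (pr i).hasFDerivAt

noncomputable def M12 (p : E4) : Matrix (Fin 4) (Fin 4) ℝ :=
  !![2 * p 0, -2 * p 1, -1, 0;
     -2 * p 1, -2 * p 0, 0, 1;
     1, 0, 2 * p 2, -2 * p 3;
     0, -1, -2 * p 3, -2 * p 2]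

lemma toCLM_apply (A : Matrix (Fin 4) (Fin 4) ℝ) (x : E4) (i : Fin 4) :
    Matrix.toEuclideanCLM (𝕜 := ℝ) A x i = A.mulVec x i := rfl

lemma key (p : E4) : HasFDerivAt f12 (Matrix.toEuclideanCLM (𝕜 := ℝ) (M12 p)) p := by
  set e := EuclideanSpace.equiv (Fin 4) ℝ with he
  set D := Matrix.toEuclideanCLM (𝕜 := ℝ) (M12 p) with hDdef
  have hg : HasFDerivAt (fun q : E4 => (e (f12 q) : Fin 4 → ℝ))
      ((e : E4 →L[ℝ] (Fin 4 → ℝ)).comp D) p := by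
    apply hasFDerivAt_pi''
    intro i
    fin_cases i
    · have h : HasFDerivAt (fun q : E4 => -(q 2) + q 0 * q 0 - q 1 * q 1)
          (-(pr 2) + (p 0 • pr 0 + p 0 • pr 0) - (p 1 • pr 1 + p 1 • pr 1)) p :=
        ((prh 2 p).neg.add ((prh 0 p).mul (prh 0 p))).sub ((prh 1 p).mul (prh 1 p))
      convert h using 1
      all_goals try (funext q; simp [f12, mk4, he]; try ring)
      all_goals try (ext v; simp [toCLM_apply, hDdef, M12, pr, Matrix.mulVec, dotProduct, Fin.sum_univ_four, he]; try ring)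
    · have h : HasFDerivAt (fun q : E4 => q 3 - 2 * q 0 * q 1)
          (pr 3 - ((2 * p 0) • pr 1 + p 1 • ((2:ℝ) • pr 0))) p :=
        (prh 3 p).sub (((prh 0 p).const_mul 2).mul (prh 1 p))
      convert h using 1
      all_goals try (funext q; simp [f12, mk4, he]; try ring)
      all_goals try (ext v; simp [toCLM_apply, hDdef, M12, pr, Matrix.mulVec, dotProduct, Fin.sum_univ_four, he]; try ring)
    · have h : HasFDerivAt (fun q : E4 => q 0 + q 2 * q 2 - q 3 * q 3)
          (pr 0 + (p 2 • pr 2 + p 2 • pr 2) - (p 3 • pr 3 + p 3 • pr 3)) p :=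
        ((prh 0 p).add ((prh 2 p).mul (prh 2 p))).sub ((prh 3 p).mul (prh 3 p))
      convert h using 1
      all_goals try (funext q; simp [f12, mk4, he]; try ring)
      all_goals try (ext v; simp [toCLM_apply, hDdef, M12, pr, Matrix.mulVec, dotProduct, Fin.sum_univ_four, he]; try ring)
    · have h : HasFDerivAt (fun q : E4 => -(q 1) - 2 * q 2 * q 3)
          (-(pr 1) - ((2 * p 2) • pr 3 + p 3 • ((2:ℝ) • pr 2))) p :=
        (prh 1 p).neg.sub (((prh 2 p).const_mul 2).mul (prh 3 p))
      convert h using 1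
      all_goals try (funext q; simp [f12, mk4, he]; try ring)
      all_goals try (ext v; simp [toCLM_apply, hDdef, M12, pr, Matrix.mulVec, dotProduct, Fin.sum_univ_four, he]; try ring)
  have h2 := (e.symm.hasFDerivAt (x := fun i => e (f12 p) i)).comp p hg
  convert h2 using 1
  all_goals try (funext q; simp [he])
  all_goals try (ext v; simp [toCLM_apply, hDdef, he])

theorem stmt_12 :
    ∀ p : E4, fderiv ℝ f12 p * fderiv ℝ f12 p = -1 ↔ p = 0 := by

  intro p
  rw [(key p).fderiv]
  constructor
  · intro h
    have h' : M12 p * M12 p = -1 := by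
      apply EquivLike.injective (Matrix.toEuclideanCLM (𝕜 := ℝ) (n := Fin 4))
      rw [map_mul, map_neg, map_one]
      exact h
    have h00 : (M12 p * M12 p) 0 0 = (-1 : Matrix (Fin 4) (Fin 4) ℝ) 0 0 := by rw [h']
    have h22 : (M12 p * M12 p) 2 2 = (-1 : Matrix (Fin 4) (Fin 4) ℝ) 2 2 := by rw [h']
    simp [M12, Matrix.mul_apply, Fin.sum_univ_four, Matrix.one_apply] at h00 h22
    have hx : p 0 = 0 := by nlinarith [sq_nonneg (p 0), sq_nonneg (p 1)]
    have hy : p 1 = 0 := by nlinarith [sq_nonneg (p 0), sq_nonneg (p 1)]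
    have hz : p 2 = 0 := by nlinarith [sq_nonneg (p 2), sq_nonneg (p 3)]
    have hw : p 3 = 0 := by nlinarith [sq_nonneg (p 2), sq_nonneg (p 3)]
    refine PiLp.ext fun i => ?_
    fin_cases i
    · exact hx
    · exact hy
    · exact hz
    · exact hw
  · intro h
    subst h
    rw [← map_mul]
    have hM : M12 (0 : E4) * M12 0 = -1 := by
      ext i j
      fin_cases i <;> fin_cases j <;>
        simp [M12, Matrix.mul_apply, Fin.sum_univ_four, Matrix.one_apply, Matrix.vecHead, Matrix.vecTail] <;> norm_num
    rw [hM, map_neg, map_one]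

end
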